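/- On any active ε-greedy trajectory for which event E holds, for every T ≥ 1 the empirically optimal policy satisfies L(π_{T+1}) − L(π*) ≤ Δ*_{T+1}(π_{T+1}); in particular L(π_{T+1}) − L(π*) ≤ Δ_{T+1}. -/

import Mathlib

open MeasureTheory Finset

namespace CB

/-- Data of an active ε-greedy trajectory: contexts, loss vectors, chosen actions,
empirical minimizers, constrained empirical minimizers, explored action sets and
sampling probabilities. -/
structure TrajData (K : ℕ) (X : Type*) where
  x : ℕ → X
  loss : ℕ → Fin K → ℝ
  act : ℕ → Fin K
  pit : ℕ → X → Fin K
  pita : ℕ → Fin K → X → Fin K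
  Aset : ℕ → Finset (Fin K)
  p : ℕ → Fin K → ℝ

variable {K : ℕ} {X : Type*}

/-- IPS loss estimate `ℓ̂_t(b)` with value 1 on unexplored actions. -/
noncomputable def TrajData.lhat (τ : TrajData K X) (t : ℕ) (b : Fin K) : ℝ :=
  if b ∈ τ.Aset t then (if b = τ.act t then τ.loss t (τ.act t) / τ.p t (τ.act t) else 0) else 1

/-- Biased loss `ℓ̃_t(b)` with value 1 on unexplored actions. -/
noncomputable def TrajData.ltilde (τ : TrajData K X) (t : ℕ) (b : Fin K) : ℝ :=
  if b ∈ τ.Aset t then τ.loss t b else 1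

/-- `L̂_T(π)`. -/
noncomputable def TrajData.Lhat (τ : TrajData K X) (T : ℕ) (π : X → Fin K) : ℝ :=
  (1 / (T : ℝ)) * ∑ t ∈ Finset.Icc 1 T, τ.lhat t (π (τ.x t))

/-- `L̃_T(π)`. -/
noncomputable def TrajData.Ltilde (τ : TrajData K X) (T : ℕ) (π : X → Fin K) : ℝ :=
  (1 / (T : ℝ)) * ∑ t ∈ Finset.Icc 1 T, τ.ltilde t (π (τ.x t))

/-- `L_T(π)`, the empirical loss on the true (unobserved) loss vectors. -/
noncomputable def TrajData.Lemp (τ : TrajData K X) (T : ℕ) (π : X → Fin K) : ℝ :=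
  (1 / (T : ℝ)) * ∑ t ∈ Finset.Icc 1 T, τ.loss t (π (τ.x t))

/-- `e_T = log(2|Π|(T²+T)/δ)/T`. -/
noncomputable def eBound (N : ℕ) (δ : ℝ) (T : ℕ) : ℝ :=
  Real.log (2 * N * ((T : ℝ) ^ 2 + T) / δ) / T

/-- `Δ_T = (√(2K/ε)+1)·√(e_{T−1}) + (K/ε+3)·e_{T−1}`. -/
noncomputable def Δbound (K : ℕ) (ε δ : ℝ) (N : ℕ) (T : ℕ) : ℝ :=
  (Real.sqrt (2 * K / ε) + 1) * Real.sqrt (eBound N δ (T - 1))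
    + ((K : ℝ) / ε + 3) * eBound N δ (T - 1)

/-- `Δ*_T(π)` expressed through `r = ρ(π,π*)`. -/
noncomputable def Δstar (K : ℕ) (ε δ : ℝ) (N : ℕ) (r : ℝ) (T : ℕ) : ℝ :=
  (Real.sqrt (2 * K / ε) + 1) * Real.sqrt (r * eBound N δ (T - 1))
    + ((K : ℝ) / ε + 3) * eBound N δ (T - 1)

/-- Population (expected) loss `L(π)`. -/
noncomputable def popLoss [MeasurableSpace X] (D : Measure (X × (Fin K → ℝ)))
    (π : X → Fin K) : ℝ :=
  ∫ z, z.2 (π z.1) ∂D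

/-- Expected disagreement `ρ(π,π') = P_x(π(x) ≠ π'(x))`. -/
noncomputable def disag [MeasurableSpace X] (D : Measure (X × (Fin K → ℝ)))
    (π π' : X → Fin K) : ℝ :=
  (D.map Prod.fst {x | π x ≠ π' x}).toReal

/-- The defining properties of an active ε-greedy trajectory. -/
def TrajData.IsValid (τ : TrajData K X) (P : Finset (X → Fin K)) (ε δ : ℝ) : Prop :=
  (∀ t b, τ.loss t b ∈ Set.Icc (0 : ℝ) 1) ∧
  (∀ t, 1 ≤ t → τ.pit t ∈ P ∧ ∀ π ∈ P, τ.Lhat (t - 1) (τ.pit t) ≤ τ.Lhat (t - 1) π) ∧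
  (∀ t, 1 ≤ t → ∀ b : Fin K, τ.pita t b ∈ P ∧ τ.pita t b (τ.x t) = b ∧
      ∀ π ∈ P, π (τ.x t) = b → τ.Lhat (t - 1) (τ.pita t b) ≤ τ.Lhat (t - 1) π) ∧
  (τ.Aset 1 = Finset.univ) ∧
  (∀ t, 2 ≤ t → ∀ b : Fin K, b ∈ τ.Aset t ↔
      τ.Lhat (t - 1) (τ.pita t b) - τ.Lhat (t - 1) (τ.pit t) ≤ Δbound K ε δ P.card t) ∧
  (∀ t, 1 ≤ t →
      τ.p t (τ.pit t (τ.x t)) = 1 - (((τ.Aset t).card : ℝ) - 1) * ε / K ∧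
      (∀ b ∈ τ.Aset t, b ≠ τ.pit t (τ.x t) → τ.p t b = ε / K) ∧
      (∀ b, b ∉ τ.Aset t → τ.p t b = 0)) ∧
  (∀ t, 1 ≤ t → 0 < τ.p t (τ.act t))

/-- Event `E`: the two deviation bounds hold simultaneously for all policies and horizons. -/
def TrajData.EventE [MeasurableSpace X] (τ : TrajData K X) (P : Finset (X → Fin K))
    (D : Measure (X × (Fin K → ℝ))) (pistar : X → Fin K) (ε δ : ℝ) : Prop :=
  ∀ π ∈ P, ∀ T : ℕ, 1 ≤ T →
    |(τ.Lhat T π - τ.Lhat T pistar) - (τ.Ltilde T π - τ.Ltilde T pistar)| ≤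
        Real.sqrt (2 * K * disag D π pistar * eBound P.card δ T / ε)
          + ((K : ℝ) / ε + 1) * eBound P.card δ T ∧
    |(τ.Lemp T π - τ.Lemp T pistar) - (popLoss D π - popLoss D pistar)| ≤
        Real.sqrt (disag D π pistar * eBound P.card δ T) + 2 * eBound P.card δ T


/-! Under event `E`, the population excess loss `L(π) − L(π*)` exceeds the empirical excess
loss `L̂_T(π) − L̂_T(π*)` by at most `Δ*_{T+1}(π)`, provided `π*` was never eliminated before
time `T + 1`: the only bias of `L̂_T` is then `L̃_T ≥ L_T`, with equality at `π*`. Applied to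
`π = π_{T+1}` this gives the theorem, and since `π*` is optimal for `L` it also shows that
`π*` survives the elimination test at time `T + 1`, which closes an induction on `T`. -/

theorem sqrt_mul_le_sqrt_of_le_one {r e : ℝ} (hr₀ : 0 ≤ r) (hr₁ : r ≤ 1) :
    Real.sqrt (r * e) ≤ Real.sqrt e := by
  rw [Real.sqrt_mul hr₀]
  exact mul_le_of_le_one_left (Real.sqrt_nonneg e) (Real.sqrt_le_one.mpr hr₁)

theorem Δstar_le_Δbound (K : ℕ) (ε δ : ℝ) (N : ℕ) {r : ℝ} (hr₀ : 0 ≤ r) (hr₁ : r ≤ 1)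
    (T : ℕ) : Δstar K ε δ N r T ≤ Δbound K ε δ N T := by
  unfold Δstar Δbound
  gcongr _ * ?_ + _
  exact sqrt_mul_le_sqrt_of_le_one hr₀ hr₁

section Disagreement

variable [MeasurableSpace X] (D : Measure (X × (Fin K → ℝ)))

theorem disag_nonneg (π π' : X → Fin K) : 0 ≤ disag D π π' := ENNReal.toReal_nonneg

theorem disag_le_one [IsProbabilityMeasure D] (π π' : X → Fin K) : disag D π π' ≤ 1 := by
  have : IsProbabilityMeasure (D.map Prod.fst) :=
    Measure.isProbabilityMeasure_map measurable_fst.aemeasurable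
  exact ENNReal.toReal_le_of_le_ofReal zero_le_one (by simpa using prob_le_one)

end Disagreement

namespace TrajData

variable (τ : TrajData K X)

theorem Lemp_le_Ltilde (hloss : ∀ t b, τ.loss t b ≤ 1) (T : ℕ) (π : X → Fin K) :
    τ.Lemp T π ≤ τ.Ltilde T π := by
  unfold Lemp Ltilde ltilde
  gcongr with t
  split_ifs
  exacts [le_rfl, hloss t _]

theorem Ltilde_eq_Lemp {T : ℕ} {π : X → Fin K}
    (hπ : ∀ t ∈ Icc 1 T, π (τ.x t) ∈ τ.Aset t) : τ.Ltilde T π = τ.Lemp T π := by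
  unfold Ltilde Lemp ltilde
  congr 1
  exact sum_congr rfl fun t ht => if_pos (hπ t ht)

variable {τ}

theorem EventE.popLoss_sub_le_Lhat_sub_add_Δstar [MeasurableSpace X]
    {P : Finset (X → Fin K)} {D : Measure (X × (Fin K → ℝ))} {pistar : X → Fin K} {ε δ : ℝ}
    (hE : τ.EventE P D pistar ε δ) (hε : 0 ≤ ε) (hloss : ∀ t b, τ.loss t b ≤ 1) {T : ℕ}
    (hT : 1 ≤ T) (hstar : ∀ t ∈ Icc 1 T, pistar (τ.x t) ∈ τ.Aset t) {π : X → Fin K}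
    (hπ : π ∈ P) :
    popLoss D π - popLoss D pistar ≤
      τ.Lhat T π - τ.Lhat T pistar + Δstar K ε δ P.card (disag D π pistar) (T + 1) := by
  obtain ⟨hIPS, hemp⟩ := hE π hπ T hT
  have hsplit : Real.sqrt (2 * K * disag D π pistar * eBound P.card δ T / ε) =
      Real.sqrt (2 * K / ε) * Real.sqrt (disag D π pistar * eBound P.card δ T) := by
    rw [← Real.sqrt_mul (by positivity)]
    ring_nf
  rw [hsplit] at hIPS
  have hbias := τ.Lemp_le_Ltilde hloss T π
  have hunbiased := τ.Ltilde_eq_Lemp hstar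
  simp only [Δstar, Nat.add_sub_cancel]
  linarith [(abs_le.mp hIPS).1, (abs_le.mp hemp).1]

theorem IsValid.pistar_mem_Aset [MeasurableSpace X] {P : Finset (X → Fin K)}
    {D : Measure (X × (Fin K → ℝ))} [IsProbabilityMeasure D] {pistar : X → Fin K}
    (hstar : pistar ∈ P) (hstar_opt : ∀ π ∈ P, popLoss D pistar ≤ popLoss D π)
    {ε δ : ℝ} (hε : 0 ≤ ε) (htr : τ.IsValid P ε δ) (hE : τ.EventE P D pistar ε δ) :
    ∀ t, 1 ≤ t → pistar (τ.x t) ∈ τ.Aset t := by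
  obtain ⟨hloss, hpit, hpita, hA1, hAset, -⟩ := htr
  intro t ht
  induction t using Nat.strong_induction_on with
  | _ t ih =>
    obtain rfl | ⟨T, hT, rfl⟩ : t = 1 ∨ ∃ T, 1 ≤ T ∧ t = T + 1 :=
      (eq_or_lt_of_le ht).imp Eq.symm fun h => ⟨t - 1, by omega, by omega⟩
    · simp [hA1]
    · obtain ⟨hπP, -⟩ := hpit (T + 1) (by omega)
      have hexcess := hE.popLoss_sub_le_Lhat_sub_add_Δstar hε (fun t b => (hloss t b).2) hT
        (fun s hs => ih s (by simp at hs; omega) (mem_Icc.mp hs).1) hπP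
      obtain ⟨-, -, hpita_min⟩ := hpita (T + 1) (by omega) (pistar (τ.x (T + 1)))
      have hpita_le := hpita_min pistar hstar rfl
      have hopt := hstar_opt _ hπP
      have hΔ := Δstar_le_Δbound K ε δ P.card (disag_nonneg D (τ.pit (T + 1)) pistar)
        (disag_le_one D (τ.pit (T + 1)) pistar) (T + 1)
      rw [hAset (T + 1) (by omega)]
      rw [Nat.add_sub_cancel] at hpita_le ⊢
      linarith

end TrajData

theorem correctness_of_empirical_minimizer_general
    {X : Type*} [MeasurableSpace X] {K : ℕ}
    (P : Finset (X → Fin K))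
    (D : Measure (X × (Fin K → ℝ))) [IsProbabilityMeasure D]
    {ε δ : ℝ} (hε : ε ∈ Set.Ioc (0 : ℝ) 1)
    (pistar : X → Fin K) (hstar : pistar ∈ P)
    (hstar_opt : ∀ π ∈ P, popLoss D pistar ≤ popLoss D π)
    (tr : TrajData K X) (htr : tr.IsValid P ε δ)
    (hE : tr.EventE P D pistar ε δ) :
    ∀ T : ℕ, 1 ≤ T →
      popLoss D (tr.pit (T + 1)) - popLoss D pistar ≤
        Δstar K ε δ P.card (disag D (tr.pit (T + 1)) pistar) (T + 1) ∧
      popLoss D (tr.pit (T + 1)) - popLoss D pistar ≤ Δbound K ε δ P.card (T + 1) := by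
  intro T hT
  obtain ⟨hπP, hπmin⟩ := htr.2.1 (T + 1) (by omega)
  rw [Nat.add_sub_cancel] at hπmin
  have hexcess := hE.popLoss_sub_le_Lhat_sub_add_Δstar hε.1.le (fun t b => (htr.1 t b).2) hT
    (fun t ht => htr.pistar_mem_Aset hstar hstar_opt hε.1.le hE t (mem_Icc.mp ht).1) hπP
  have hΔstar : popLoss D (tr.pit (T + 1)) - popLoss D pistar ≤
      Δstar K ε δ P.card (disag D (tr.pit (T + 1)) pistar) (T + 1) := by
    linarith [hπmin pistar hstar]
  exact ⟨hΔstar, hΔstar.trans (Δstar_le_Δbound K ε δ P.card (disag_nonneg D _ pistar)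
    (disag_le_one D _ pistar) (T + 1))⟩

/-- On any active ε-greedy trajectory for which event `E` holds, for every `T ≥ 1` the
empirically optimal policy satisfies `L(π_{T+1}) − L(π*) ≤ Δ*_{T+1}(π_{T+1})`;
in particular `L(π_{T+1}) − L(π*) ≤ Δ_{T+1}`. -/
theorem correctness_of_empirical_minimizer
    {X : Type*} [MeasurableSpace X] {K : ℕ} (hK : 2 ≤ K)
    (P : Finset (X → Fin K)) (hPne : P.Nonempty)
    (hPmeas : ∀ π ∈ P, Measurable π)
    (D : Measure (X × (Fin K → ℝ))) [IsProbabilityMeasure D]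
    (hD : ∀ᵐ z ∂D, ∀ b : Fin K, z.2 b ∈ Set.Icc (0 : ℝ) 1)
    {ε δ : ℝ} (hε : ε ∈ Set.Ioc (0 : ℝ) 1) (hδ : δ ∈ Set.Ioo (0 : ℝ) 1)
    (pistar : X → Fin K) (hstar : pistar ∈ P)
    (hstar_opt : ∀ π ∈ P, popLoss D pistar ≤ popLoss D π)
    (tr : TrajData K X) (htr : tr.IsValid P ε δ)
    (hE : tr.EventE P D pistar ε δ) :
    ∀ T : ℕ, 1 ≤ T →
      popLoss D (tr.pit (T + 1)) - popLoss D pistar ≤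
        Δstar K ε δ P.card (disag D (tr.pit (T + 1)) pistar) (T + 1) ∧
      popLoss D (tr.pit (T + 1)) - popLoss D pistar ≤ Δbound K ε δ P.card (T + 1) :=
  correctness_of_empirical_minimizer_general P D hε pistar hstar hstar_opt tr htr hE

end CB
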